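/- arXiv:1103.1479 — 5 statements merged into one kernel-verified Lean document; each statement's English description precedes it below -/
import Mathlib

section
/- Let f : ℝ^d → ℝ be convex and differentiable. Then for every x ∈ ℝ^d, every unit vector h, and every t > 0, |∇f(x + t h) − ∇f(x)| ≤ (2/t) · sup over unit vectors v of ( f(x + 2t v) + f(x − 2t v) − 2 f(x) ). -/
open InnerProductSpace Set

lemma subgrad_ineq {d : ℕ} (f : EuclideanSpace ℝ (Fin d) → ℝ)
    (hconv : ConvexOn ℝ Set.univ f) (hdiff : Differentiable ℝ f)
    (a b : EuclideanSpace ℝ (Fin d)) :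
    f a + ⟪gradient f a, b - a⟫_ℝ ≤ f b := by
  have key : ⟪gradient f a, b - a⟫_ℝ = fderiv ℝ f a (b - a) := by
    rw [gradient, toDual_symm_apply]
  set φ : ℝ → ℝ := fun s => f (AffineMap.lineMap a b s) with hφ
  have hφconv : ConvexOn ℝ Set.univ φ := by
    have := hconv.comp_affineMap (AffineMap.lineMap a b (k := ℝ))
    simpa [hφ, Function.comp_def] using this
  have hlm : (fun s : ℝ => AffineMap.lineMap a b s) = fun s : ℝ => s • (b - a) + a := by
    ext s; simp [AffineMap.lineMap_apply_module']
  have hinner : HasDerivAt (fun s : ℝ => AffineMap.lineMap a b s) (b - a) 0 := by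
    rw [hlm]
    have h1 : HasDerivAt (fun s : ℝ => s • (b - a)) ((1:ℝ) • (b - a)) 0 :=
      (hasDerivAt_id (0:ℝ)).smul_const (b - a)
    simpa using (h1.add_const a)
  have hder : HasDerivAt φ (fderiv ℝ f a (b - a)) 0 := by
    have := ((hdiff (AffineMap.lineMap a b (0:ℝ))).hasFDerivAt).comp_hasDerivAt 0 hinner
    simpa [hφ, Function.comp_def] using this
  have := hφconv.le_slope_of_hasDerivAt (mem_univ (0:ℝ)) (mem_univ (1:ℝ)) one_pos hder
  rw [slope_def_field] at this
  simp only [hφ, AffineMap.lineMap_apply_module] at this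
  norm_num at this
  rw [key, map_sub]
  linarith

theorem gradient_diff_le_sup_second_difference {d : ℕ}
    (f : EuclideanSpace ℝ (Fin d) → ℝ)
    (hconv : ConvexOn ℝ Set.univ f) (hdiff : Differentiable ℝ f)
    (x : EuclideanSpace ℝ (Fin d)) (h : EuclideanSpace ℝ (Fin d))
    (hh : ‖h‖ = 1) (t : ℝ) (ht : 0 < t) :
    ‖gradient f (x + t • h) - gradient f x‖ ≤
      (2 / t) * ⨆ v : {v : EuclideanSpace ℝ (Fin d) // ‖v‖ = 1},
        (f (x + (2 * t) • v.1) + f (x - (2 * t) • v.1) - 2 * f x) := by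
  classical
  set g : EuclideanSpace ℝ (Fin d) := gradient f (x + t • h) - gradient f x with hgdef
  set F : {v : EuclideanSpace ℝ (Fin d) // ‖v‖ = 1} → ℝ :=
    fun v => f (x + (2 * t) • v.1) + f (x - (2 * t) • v.1) - 2 * f x with hF
  have hsph : IsCompact {v : EuclideanSpace ℝ (Fin d) | ‖v‖ = 1} := by
    have : {v : EuclideanSpace ℝ (Fin d) | ‖v‖ = 1} = Metric.sphere (0 : EuclideanSpace ℝ (Fin d)) 1 := by
      ext v; simp [mem_sphere_zero_iff_norm]
    rw [this]; exact isCompact_sphere 0 1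
  haveI : CompactSpace {v : EuclideanSpace ℝ (Fin d) // ‖v‖ = 1} :=
    isCompact_iff_compactSpace.mp hsph
  have hfc : Continuous f := hdiff.continuous
  have hFc : Continuous F := by
    apply Continuous.sub
    · exact (hfc.comp (continuous_const.add (continuous_subtype_val.const_smul (2 * t)))).add
        (hfc.comp (continuous_const.sub (continuous_subtype_val.const_smul (2 * t))))
    · exact continuous_const
  have hbdd : BddAbove (Set.range F) := (isCompact_range hFc).bddAbove
  have hnonneg : ∀ v : {v : EuclideanSpace ℝ (Fin d) // ‖v‖ = 1}, 0 ≤ F v := by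
    intro v
    have key := hconv.2 (Set.mem_univ (x + (2 * t) • v.1)) (Set.mem_univ (x - (2 * t) • v.1))
      (by norm_num : (0:ℝ) ≤ (1:ℝ)/2) (by norm_num : (0:ℝ) ≤ (1:ℝ)/2) (by norm_num)
    have hx : ((1:ℝ)/2) • (x + (2 * t) • v.1) + ((1:ℝ)/2) • (x - (2 * t) • v.1) = x := by
      module
    rw [hx] at key
    simp only [smul_eq_mul] at key
    simp only [hF]
    linarith
  have hS0 : 0 ≤ ⨆ v : {v : EuclideanSpace ℝ (Fin d) // ‖v‖ = 1}, F v :=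
    le_trans (hnonneg ⟨h, hh⟩) (le_ciSup hbdd ⟨h, hh⟩)
  by_cases hg0 : g = 0
  · rw [hg0]
    simp only [norm_zero]
    positivity
  · have hgn : (0:ℝ) < ‖g‖ := norm_pos_iff.mpr hg0
    have hvn : ‖(‖g‖⁻¹ • g : EuclideanSpace ℝ (Fin d))‖ = 1 := by
      rw [norm_smul, norm_inv, norm_norm, inv_mul_cancel₀ hgn.ne']
    have i1 := subgrad_ineq f hconv hdiff (x + t • h) (x + (2 * t) • (‖g‖⁻¹ • g))
    have i2 := subgrad_ineq f hconv hdiff x (x - (2 * t) • (‖g‖⁻¹ • g))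
    have i3 := subgrad_ineq f hconv hdiff x (x + t • h)
    have e1 : x + (2 * t) • (‖g‖⁻¹ • g) - (x + t • h)
        = (2 * t * ‖g‖⁻¹) • g - t • h := by module
    have e2 : x - (2 * t) • (‖g‖⁻¹ • g) - x = -((2 * t * ‖g‖⁻¹) • g) := by module
    have e3 : x + t • h - x = t • h := by module
    rw [e1] at i1; rw [e2] at i2; rw [e3] at i3
    simp only [inner_sub_right, inner_neg_right, real_inner_smul_right] at i1 i2 i3
    have hpq : ⟪gradient f (x + t • h), g⟫_ℝ - ⟪gradient f x, g⟫_ℝ = ‖g‖ ^ 2 := by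
      rw [← inner_sub_left, ← hgdef, real_inner_self_eq_norm_sq]
    have hgh : ⟪gradient f (x + t • h), h⟫_ℝ - ⟪gradient f x, h⟫_ℝ ≤ ‖g‖ := by
      rw [← inner_sub_left, ← hgdef]
      calc ⟪g, h⟫_ℝ ≤ ‖g‖ * ‖h‖ := real_inner_le_norm g h
        _ = ‖g‖ := by rw [hh, mul_one]
    have hAB : 2 * t * ‖g‖⁻¹ * ⟪gradient f (x + t • h), g⟫_ℝ
        - 2 * t * ‖g‖⁻¹ * ⟪gradient f x, g⟫_ℝ = 2 * t * ‖g‖ := by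
      rw [← mul_sub, hpq]
      field_simp
    have hkey : t * ‖g‖ ≤ F ⟨‖g‖⁻¹ • g, hvn⟩ := by
      simp only [hF]
      nlinarith [mul_le_mul_of_nonneg_left hgh ht.le]
    have hle : t * ‖g‖ ≤ ⨆ v : {v : EuclideanSpace ℝ (Fin d) // ‖v‖ = 1}, F v :=
      le_trans hkey (le_ciSup hbdd ⟨‖g‖⁻¹ • g, hvn⟩)
    rw [div_mul_eq_mul_div, le_div_iff₀ ht]
    nlinarith [hS0, hle]
end

section
/- Let Ψ : (0,∞) → (0,∞) be continuous and let φ : [0,∞) → [0,∞) be defined by 2∫₀^{φ(r)} s Ψ(s) ds = r² (so that the radial map T(x) = φ(|x|)·x/|x| pushes planar Lebesgue measure onto Ψ(|x|)dx). If (s Ψ(s))' ≥ 1 for all s > 0, then φ'(r) ≤ 1 for all r > 0. -/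
open intervalIntegral

theorem radial_transport_contraction_plane
    (Ψ : ℝ → ℝ) (hΨpos : ∀ s > 0, 0 < Ψ s) (hΨc : ContinuousOn Ψ (Set.Ioi 0))
    (g : ℝ → ℝ) (hΨdiff : ∀ s > 0, HasDerivAt (fun u => u * Ψ u) (g s) s)
    (hg : ∀ s > 0, 1 ≤ g s)
    (φ : ℝ → ℝ) (hφpos : ∀ r ≥ 0, 0 ≤ φ r)
    (hφ : ∀ r ≥ 0, 2 * (∫ s in (0:ℝ)..(φ r), s * Ψ s) = r ^ 2)
    (φ' : ℝ → ℝ) (hφdiff : ∀ r > 0, HasDerivAt φ (φ' r) r) :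
    ∀ r > 0, φ' r ≤ 1 := by
  set f : ℝ → ℝ := fun s => s * Ψ s with hf
  have hfc : ContinuousOn f (Set.Ioi 0) := continuousOn_id.mul hΨc
  -- monotonicity of f s - s on Ioi 0
  have hmono : MonotoneOn (fun s => f s - s) (Set.Ioi 0) := by
    apply monotoneOn_of_deriv_nonneg (convex_Ioi 0)
    · exact fun x hx => (((hΨdiff x hx).sub (hasDerivAt_id x)).continuousAt).continuousWithinAt
    · rw [interior_Ioi]
      exact fun x hx => (((hΨdiff x hx).sub (hasDerivAt_id x)).differentiableAt).differentiableWithinAt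
    · rw [interior_Ioi]
      intro x hx
      rw [(show HasDerivAt (fun s => f s - s) (g x - 1) x from ((hΨdiff x hx).sub (hasDerivAt_id' (x := x)))).deriv]
      have := hg x hx
      linarith
  intro r hr
  have hr0 : (0:ℝ) ≤ r := le_of_lt hr
  set a := φ r with ha
  have ha0 : 0 ≤ a := hφpos r hr0
  have hint_eq : 2 * (∫ s in (0:ℝ)..a, f s) = r ^ 2 := hφ r hr0
  have hrsq : (0:ℝ) < r ^ 2 := by positivity
  have hapos : 0 < a := by
    rcases lt_or_eq_of_le ha0 with h | h
    · exact h
    · exfalso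
      rw [← h, intervalIntegral.integral_same] at hint_eq
      simp at hint_eq
      nlinarith
  have hint : IntervalIntegrable f MeasureTheory.volume 0 a := by
    by_contra hni
    rw [intervalIntegral.integral_undef hni] at hint_eq
    nlinarith
  -- f a ≥ a
  have hfa_ge : a ≤ f a := by
    by_contra hlt
    push_neg at hlt
    set c := a - f a with hc
    have hcpos : 0 < c := by simp [hc]; linarith
    set ε := min (c / 2) (a / 2) with hε
    have hεpos : 0 < ε := lt_min (by linarith) (by linarith)
    have hεa : ε < a := lt_of_le_of_lt (min_le_right _ _) (by linarith)
    have := hmono (Set.mem_Ioi.2 hεpos) (Set.mem_Ioi.2 hapos) (le_of_lt hεa)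
    have hfε : 0 < f ε := mul_pos hεpos (hΨpos ε hεpos)
    have hε2 : ε ≤ c / 2 := min_le_left _ _
    simp only at this
    nlinarith
  -- integral bound: ∫₀^a f ≤ a * f a - a^2/2
  have hbound : (∫ s in (0:ℝ)..a, f s) ≤ ∫ s in (0:ℝ)..a, (f a - a + s) := by
    apply intervalIntegral.integral_mono_on ha0 hint
    · exact (continuous_const.add continuous_id).intervalIntegrable 0 a
    · intro x hx
      rcases lt_or_eq_of_le hx.1 with hx0 | hx0
      · have := hmono (Set.mem_Ioi.2 hx0) (Set.mem_Ioi.2 hapos) hx.2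
        simp only at this
        linarith
      · rw [← hx0]
        have h0 : f 0 = 0 := by simp [hf]
        rw [h0]
        linarith
  have hrhs : (∫ s in (0:ℝ)..a, (f a - a + s)) = a * (f a - a) + a ^ 2 / 2 := by
    rw [intervalIntegral.integral_add (intervalIntegrable_const)
      (intervalIntegral.intervalIntegrable_id)]
    simp [integral_id]
    ring
  have hkey : r ≤ f a := by
    have h1 : r ^ 2 / 2 ≤ a * (f a - a) + a ^ 2 / 2 := by
      rw [← hrhs]
      nlinarith
    nlinarith [sq_nonneg (r - a)]
  -- differentiate
  have hfapos : 0 < f a := mul_pos hapos (hΨpos a hapos)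
  have hF : HasDerivAt (fun x => ∫ s in (0:ℝ)..x, f s) (f a) a := by
    apply intervalIntegral.integral_hasDerivAt_right hint
    · exact (hfc.stronglyMeasurableAtFilter isOpen_Ioi) a hapos
    · exact (hfc a hapos).continuousAt (isOpen_Ioi.mem_nhds hapos)
  have hcomp : HasDerivAt (fun x => 2 * ∫ s in (0:ℝ)..(φ x), f s) (2 * (f a * φ' r)) r :=
    ((hF.comp r (hφdiff r hr)).const_mul 2)
  have heq : (fun x => 2 * ∫ s in (0:ℝ)..(φ x), f s) =ᶠ[nhds r] (fun x => x ^ 2) := by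
    filter_upwards [isOpen_Ioi.mem_nhds hr] with x hx
    exact hφ x (le_of_lt hx)
  have hsq : HasDerivAt (fun x : ℝ => x ^ 2) (2 * (f a * φ' r)) r :=
    hcomp.congr_of_eventuallyEq heq.symm
  have hsq' : HasDerivAt (fun x : ℝ => x ^ 2) (2 * r) r := by
    simpa using hasDerivAt_pow 2 r
  have hder : 2 * (f a * φ' r) = 2 * r := hsq.unique hsq'
  nlinarith
end

section
/- Let Ψ : (0,∞) → (0,∞) be C¹ and d ≥ 2. If (s Ψ^{1/(d-1)}(s))' ≥ 1 for all s > 0, then ∫₀^r s^{d-1} Ψ(s) ds ≤ (r Ψ^{1/(d-1)}(r))^d / d for all r > 0. -/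
open intervalIntegral

theorem integral_le_d_dim
    (d : ℕ) (hd : 2 ≤ d)
    (Ψ : ℝ → ℝ) (hΨpos : ∀ s > 0, 0 < Ψ s)
    (g : ℝ → ℝ)
    (hΨdiff : ∀ s > 0, HasDerivAt (fun u => u * (Ψ u) ^ ((d - 1 : ℝ))⁻¹) (g s) s)
    (hΨc : ContinuousOn Ψ (Set.Ioi 0))
    (hg : ∀ s > 0, 1 ≤ g s) :
    ∀ r > 0, (∫ s in (0:ℝ)..r, s ^ (d - 1) * Ψ s) ≤
      (r * (Ψ r) ^ ((d - 1 : ℝ))⁻¹) ^ d / d := by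
  intro r hr
  set F : ℝ → ℝ := fun u => u * (Ψ u) ^ ((d - 1 : ℝ))⁻¹ with hF
  set f : ℝ → ℝ := fun s => s ^ (d - 1) * Ψ s with hf
  have hd1 : (1:ℝ) ≤ (d:ℝ) - 1 := by
    have : (2:ℝ) ≤ (d:ℝ) := by exact_mod_cast hd
    linarith
  have hd1ne : ((d:ℝ) - 1) ≠ 0 := by linarith
  have hFpos : ∀ s > 0, 0 < F s := fun s hs =>
    mul_pos hs (Real.rpow_pos_of_pos (hΨpos s hs) _)
  have hdnat : ((d - 1 : ℕ) : ℝ) = (d:ℝ) - 1 := by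
    have : 1 ≤ d := le_trans (by norm_num) hd
    push_cast [this]; ring
  -- key identity: F s ^ (d-1) = f s for s > 0
  have hFf : ∀ s > 0, F s ^ (d - 1) = f s := by
    intro s hs
    have hΨs := (hΨpos s hs).le
    simp only [hF, hf, mul_pow]
    congr 1
    rw [← Real.rpow_natCast ((Ψ s) ^ ((d - 1 : ℝ))⁻¹) (d-1), ← Real.rpow_mul hΨs, hdnat,
      inv_mul_cancel₀ hd1ne, Real.rpow_one]
  -- continuity of f on Ioi 0
  have hfc : ContinuousOn f (Set.Ioi 0) :=
    (continuous_pow (d-1)).continuousOn.mul hΨc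
  have hdpos : (0:ℝ) < d := by positivity
  have hRHSpos : 0 < F r ^ d / d :=
    div_pos (pow_pos (hFpos r hr) d) hdpos
  have hgoal : (r * Ψ r ^ (((d:ℝ) - 1))⁻¹) ^ d / (d:ℝ) = F r ^ d / d := rfl
  rw [hgoal]
  by_cases hint : IntervalIntegrable f MeasureTheory.volume 0 r
  · -- main case
    have key : ∀ ε ∈ Set.Ioo (0:ℝ) r, (∫ s in ε..r, f s) ≤ F r ^ d / d := by
      intro ε hε
      obtain ⟨hε0, hεr⟩ := hε
      have hIcc : Set.Icc ε r ⊆ Set.Ioi 0 := fun x hx => lt_of_lt_of_le hε0 hx.1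
      have hintloc : ∀ s ∈ Set.Icc ε r, IntervalIntegrable f MeasureTheory.volume ε s := by
        intro s hs
        apply ContinuousOn.intervalIntegrable
        apply hfc.mono
        rw [Set.uIcc_of_le hs.1]
        exact fun x hx => lt_of_lt_of_le hε0 hx.1
      set Φ : ℝ → ℝ := fun s => F s ^ d / d - ∫ t in ε..s, f t with hΦ
      have hΦderiv : ∀ s ∈ Set.Icc ε r, HasDerivAt Φ (F s ^ (d-1) * g s - f s) s := by
        intro s hs
        have hs0 : 0 < s := hIcc hs
        have h1 : HasDerivAt (fun u => F u ^ d / d) (F s ^ (d-1) * g s) s := by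
          have := ((hΨdiff s hs0).pow d).div_const (d:ℝ)
          refine HasDerivAt.congr_deriv this ?_
          have hd0 : (d:ℝ) ≠ 0 := by positivity
          rw [div_eq_iff hd0]
          ring
        have h2 : HasDerivAt (fun u => ∫ t in ε..u, f t) (f s) s := by
          apply intervalIntegral.integral_hasDerivAt_right (hintloc s hs)
          · exact ⟨Set.Ioi 0, Ioi_mem_nhds hs0, hfc.aestronglyMeasurable measurableSet_Ioi⟩
          · exact hfc.continuousAt (Ioi_mem_nhds hs0)
        exact h1.sub h2
      have hmono : MonotoneOn Φ (Set.Icc ε r) := by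
        apply monotoneOn_of_deriv_nonneg (convex_Icc ε r)
        · exact fun s hs => (hΦderiv s hs).continuousAt.continuousWithinAt
        · intro s hs
          rw [interior_Icc] at hs
          exact ((hΦderiv s (Set.Ioo_subset_Icc_self hs)).differentiableAt).differentiableWithinAt
        · intro s hs
          rw [interior_Icc] at hs
          have hs0 : 0 < s := lt_of_lt_of_le hε0 hs.1.le
          rw [(hΦderiv s (Set.Ioo_subset_Icc_self hs)).deriv]
          have h1 : f s ≤ F s ^ (d-1) * g s := by
            rw [← hFf s hs0]
            nth_rewrite 1 [← mul_one (F s ^ (d-1))]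
            exact mul_le_mul_of_nonneg_left (hg s hs0) (pow_nonneg (hFpos s hs0).le _)
          linarith
      have h := hmono (Set.left_mem_Icc.2 hεr.le) (Set.right_mem_Icc.2 hεr.le) hεr.le
      simp only [hΦ, intervalIntegral.integral_same, sub_zero] at h
      have hFε : 0 ≤ F ε ^ d / d := (div_pos (pow_pos (hFpos ε hε0) d) hdpos).le
      linarith
    -- take the limit ε → 0⁺
    have hIcc : MeasureTheory.IntegrableOn f (Set.uIcc 0 r) MeasureTheory.volume := by
      rw [Set.uIcc_of_le hr.le, integrableOn_Icc_iff_integrableOn_Ioc]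
      rw [intervalIntegrable_iff_integrableOn_Ioc_of_le hr.le] at hint
      exact hint
    have hcont := intervalIntegral.continuousOn_primitive_interval_left hIcc
    have h0mem : (0:ℝ) ∈ Set.uIcc 0 r := Set.left_mem_uIcc
    have htend : Filter.Tendsto (fun x => ∫ t in x..r, f t) (nhdsWithin 0 (Set.Ioo 0 r))
        (nhds (∫ t in (0:ℝ)..r, f t)) := by
      refine (hcont 0 h0mem).mono_left (nhdsWithin_mono _ ?_)
      rw [Set.uIcc_of_le hr.le]
      exact Set.Ioo_subset_Icc_self
    have hne : (nhdsWithin (0:ℝ) (Set.Ioo 0 r)).NeBot := by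
      rw [← mem_closure_iff_nhdsWithin_neBot, closure_Ioo hr.ne]
      exact Set.left_mem_Icc.2 hr.le
    exact le_of_tendsto htend (Filter.eventually_of_mem self_mem_nhdsWithin key)
  · rw [intervalIntegral.integral_undef hint]
    exact hRHSpos.le
end

section
/- Let T : [0,∞) → [0,∞) be the monotone map transporting ν = e^{g(x)} · 1_{[0,∞)} e^{-x} dx onto μ = 1_{[0,∞)} e^{-x} dx, where g is C¹ with |g'(x)| ≤ c for all x and c < 1, and both μ, ν are probability measures. Then T'(x) ∈ [1 − c, 1 + c] for all x ≥ 0, and the inverse map S = T⁻¹ is 1/(1−c)-Lipschitz. -/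
open MeasureTheory intervalIntegral

lemma int_exp_neg_interval (a : ℝ) :
    (∫ s in (0:ℝ)..a, Real.exp (-s)) = 1 - Real.exp (-a) := by
  have h : ∀ s ∈ Set.uIcc (0:ℝ) a, HasDerivAt (fun u => -Real.exp (-u)) (Real.exp (-s)) s := by
    intro s _
    have := ((hasDerivAt_neg s).exp).neg
    exact this.congr_deriv (by ring)
  have hi : IntervalIntegrable (fun s => Real.exp (-s)) volume 0 a :=
    (Real.continuous_exp.comp continuous_neg).intervalIntegrable _ _
  have := intervalIntegral.integral_eq_sub_of_hasDerivAt h hi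
  simpa using this

lemma int_exp_neg_Ioi' (a : ℝ) {b : ℝ} (hb : 0 < b) :
    (∫ x in Set.Ioi a, Real.exp (-(b * x))) = Real.exp (-(b * a)) / b := by
  have h := MeasureTheory.integral_comp_mul_right_Ioi (fun y => Real.exp (-y)) a hb
  simp only [integral_exp_neg_Ioi, smul_eq_mul, abs_of_pos (inv_pos.mpr hb)] at h
  calc (∫ x in Set.Ioi a, Real.exp (-(b * x)))
      = ∫ x in Set.Ioi a, Real.exp (-(x * b)) := by simp [mul_comm]
    _ = b⁻¹ * Real.exp (-(a * b)) := h
    _ = Real.exp (-(b * a)) / b := by rw [mul_comm a b]; ring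

theorem exp_transport_derivative_bounds
    (g : ℝ → ℝ) (c : ℝ) (hc : c < 1) (hc0 : 0 ≤ c)
    (hgdiff : ∀ x ≥ (0:ℝ), DifferentiableAt ℝ g x)
    (hgc : ContinuousOn g (Set.Ici 0))
    (hg : ∀ x ≥ (0:ℝ), |deriv g x| ≤ c)
    (hnorm : (∫ s in Set.Ioi (0:ℝ), Real.exp (g s - s)) = 1)
    (T : ℝ → ℝ) (hTpos : ∀ x ≥ (0:ℝ), 0 ≤ T x)
    (hTdiff : ∀ x ≥ (0:ℝ), DifferentiableAt ℝ T x)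
    (hT : ∀ x ≥ (0:ℝ),
      (∫ s in (0:ℝ)..(T x), Real.exp (-s)) = ∫ s in (0:ℝ)..x, Real.exp (g s - s))
    (S : ℝ → ℝ) (hSpos : ∀ y ≥ (0:ℝ), 0 ≤ S y)
    (hST : ∀ x ≥ (0:ℝ), S (T x) = x) (hTS : ∀ y ≥ (0:ℝ), T (S y) = y) :
    (∀ x ≥ (0:ℝ), deriv T x ∈ Set.Icc (1 - c) (1 + c)) ∧
    (∀ x ≥ (0:ℝ), ∀ y ≥ (0:ℝ), |S x - S y| ≤ (1 / (1 - c)) * |x - y|) := by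
  have hc1 : (0:ℝ) < 1 - c := by linarith
  have hc2 : (0:ℝ) < 1 + c := by linarith
  have hEc : ContinuousOn (fun s => Real.exp (g s - s)) (Set.Ici 0) :=
    Real.continuous_exp.comp_continuousOn (hgc.sub continuousOn_id)
  have hint : IntegrableOn (fun s => Real.exp (g s - s)) (Set.Ioi 0) := by
    by_contra h
    rw [MeasureTheory.integral_undef h] at hnorm
    norm_num at hnorm
  -- g is c-Lipschitz on [0, ∞)
  have glip : ∀ x ∈ Set.Ici (0:ℝ), ∀ s ∈ Set.Ici (0:ℝ), |g s - g x| ≤ c * |s - x| := by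
    intro x hx s hs
    have := Convex.norm_image_sub_le_of_norm_deriv_le (fun y hy => hgdiff y hy)
      (fun y hy => by simpa [Real.norm_eq_abs] using hg y hy) (convex_Ici 0) hx hs
    simpa [Real.norm_eq_abs] using this
  -- the key identity e^{-T x} = ∫_{(x,∞)} e^{g - s}
  have hTid : ∀ x ≥ (0:ℝ), Real.exp (-(T x)) = ∫ s in Set.Ioi x, Real.exp (g s - s) := by
    intro x hx
    have h1 : (1:ℝ) - Real.exp (-(T x)) = ∫ s in (0:ℝ)..x, Real.exp (g s - s) := by
      rw [← hT x hx, int_exp_neg_interval]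
    have hsplit : (∫ s in Set.Ioi (0:ℝ), Real.exp (g s - s)) =
        (∫ s in Set.Ioc (0:ℝ) x, Real.exp (g s - s)) +
          ∫ s in Set.Ioi x, Real.exp (g s - s) := by
      rw [← MeasureTheory.setIntegral_union (Set.Ioc_disjoint_Ioi le_rfl) measurableSet_Ioi
          (hint.mono_set Set.Ioc_subset_Ioi_self) (hint.mono_set (Set.Ioi_subset_Ioi hx)),
        Set.Ioc_union_Ioi_eq_Ioi hx]
    rw [intervalIntegral.integral_of_le hx] at h1
    rw [hnorm] at hsplit
    linarith
  -- upper and lower bounds for the tail integral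
  have hup : ∀ x ≥ (0:ℝ), (∫ s in Set.Ioi x, Real.exp (g s - s)) ≤
      Real.exp (g x - x) / (1 - c) := by
    intro x hx
    have hsub : Set.Ioi x ⊆ Set.Ici (0:ℝ) := fun s hs => le_trans hx (le_of_lt hs)
    have hble : ∀ s ∈ Set.Ioi x, Real.exp (g s - s) ≤
        Real.exp (g x - c * x) * Real.exp (-((1 - c) * s)) := by
      intro s hs
      have hs0 : (0:ℝ) ≤ s := hsub hs
      have habs := glip x hx s hs0
      have hsx : |s - x| = s - x := abs_of_pos (by simpa using sub_pos.2 (Set.mem_Ioi.1 hs))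
      rw [hsx] at habs
      have h2 : g s - g x ≤ c * (s - x) := (abs_le.1 habs).2
      rw [← Real.exp_add]
      apply Real.exp_le_exp.2
      nlinarith
    have hbint : IntegrableOn
        (fun s => Real.exp (g x - c * x) * Real.exp (-((1 - c) * s))) (Set.Ioi x) := by
      have h0 := exp_neg_integrableOn_Ioi x hc1
      have h1 : IntegrableOn (fun s => Real.exp (-((1 - c) * s))) (Set.Ioi x) := by
        simpa only [neg_mul] using h0
      exact h1.const_mul _
    have hmono := MeasureTheory.setIntegral_mono_on
      (hint.mono_set (Set.Ioi_subset_Ioi hx)) hbint measurableSet_Ioi hble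
    have hval : (∫ s in Set.Ioi x, Real.exp (g x - c * x) * Real.exp (-((1 - c) * s)))
        = Real.exp (g x - x) / (1 - c) := by
      rw [MeasureTheory.integral_const_mul, int_exp_neg_Ioi' x hc1,
        ← mul_div_assoc, ← Real.exp_add]
      congr 1
      ring
    rw [hval] at hmono
    exact hmono
  have hlo : ∀ x ≥ (0:ℝ), Real.exp (g x - x) / (1 + c) ≤
      ∫ s in Set.Ioi x, Real.exp (g s - s) := by
    intro x hx
    have hsub : Set.Ioi x ⊆ Set.Ici (0:ℝ) := fun s hs => le_trans hx (le_of_lt hs)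
    have hble : ∀ s ∈ Set.Ioi x, Real.exp (g x + c * x) * Real.exp (-((1 + c) * s)) ≤
        Real.exp (g s - s) := by
      intro s hs
      have hs0 : (0:ℝ) ≤ s := hsub hs
      have habs := glip x hx s hs0
      have hsx : |s - x| = s - x := abs_of_pos (by simpa using sub_pos.2 (Set.mem_Ioi.1 hs))
      rw [hsx] at habs
      have h2 : -(c * (s - x)) ≤ g s - g x := (abs_le.1 habs).1
      rw [← Real.exp_add]
      apply Real.exp_le_exp.2
      nlinarith
    have hbint : IntegrableOn
        (fun s => Real.exp (g x + c * x) * Real.exp (-((1 + c) * s))) (Set.Ioi x) := by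
      have h0 := exp_neg_integrableOn_Ioi x hc2
      have h1 : IntegrableOn (fun s => Real.exp (-((1 + c) * s))) (Set.Ioi x) := by
        simpa only [neg_mul] using h0
      exact h1.const_mul _
    have hmono := MeasureTheory.setIntegral_mono_on
      hbint (hint.mono_set (Set.Ioi_subset_Ioi hx)) measurableSet_Ioi hble
    have hval : (∫ s in Set.Ioi x, Real.exp (g x + c * x) * Real.exp (-((1 + c) * s)))
        = Real.exp (g x - x) / (1 + c) := by
      rw [MeasureTheory.integral_const_mul, int_exp_neg_Ioi' x hc2,
        ← mul_div_assoc, ← Real.exp_add]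
      congr 1
      ring
    rw [hval] at hmono
    exact hmono
  -- the derivative identity
  have hder : ∀ x ≥ (0:ℝ), deriv T x * Real.exp (-(T x)) = Real.exp (g x - x) := by
    intro x hx
    have hsub : Set.Ioi x ⊆ Set.Ici (0:ℝ) := fun s hs => le_trans hx (le_of_lt hs)
    have hPhi : HasDerivWithinAt (fun y => ∫ s in (0:ℝ)..y, Real.exp (g s - s))
        (Real.exp (g x - x)) (Set.Ici x) x := by
      refine intervalIntegral.integral_hasDerivWithinAt_right (t := Set.Ioi x) ?_ ?_ ?_
      · exact (hEc.mono (by rw [Set.uIcc_of_le hx]; exact Set.Icc_subset_Ici_self)).intervalIntegrable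
      · exact ⟨Set.Ioi x, self_mem_nhdsWithin,
          ((hEc.mono hsub).aestronglyMeasurable measurableSet_Ioi)⟩
      · exact (hEc x hx).mono hsub
    have hT' : HasDerivAt T (deriv T x) x := (hTdiff x hx).hasDerivAt
    have h1 : HasDerivAt (fun y => Real.exp (-(T y)))
        (Real.exp (-(T x)) * -(deriv T x)) x := (hT'.neg).exp
    have h2 : HasDerivAt (fun y => 1 - Real.exp (-(T y)))
        (deriv T x * Real.exp (-(T x))) x := by
      have := h1.const_sub 1
      exact this.congr_deriv (by ring)
    have hLHS := h2.hasDerivWithinAt (s := Set.Ici x)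
    have hagree : ∀ y ∈ Set.Ici x, (1:ℝ) - Real.exp (-(T y)) =
        ∫ s in (0:ℝ)..y, Real.exp (g s - s) := by
      intro y hy
      have hy0 : (0:ℝ) ≤ y := le_trans hx hy
      rw [← hT y hy0, int_exp_neg_interval]
    have hL2 : HasDerivWithinAt (fun y => (1:ℝ) - Real.exp (-(T y)))
        (Real.exp (g x - x)) (Set.Ici x) x :=
      hPhi.congr hagree (hagree x Set.self_mem_Ici)
    have hUD : UniqueDiffWithinAt ℝ (Set.Ici x) x := uniqueDiffOn_Ici x x Set.self_mem_Ici
    exact (hLHS.derivWithin hUD).symm.trans (hL2.derivWithin hUD)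
  -- first part
  have hpart1 : ∀ x ≥ (0:ℝ), deriv T x ∈ Set.Icc (1 - c) (1 + c) := by
    intro x hx
    have hd := hder x hx
    have hF := hTid x hx
    have h1 := hup x hx
    have h2 := hlo x hx
    have hFpos : 0 < Real.exp (-(T x)) := Real.exp_pos _
    rw [hF] at hd hFpos
    rw [le_div_iff₀ hc1] at h1
    rw [div_le_iff₀ hc2] at h2
    constructor
    · nlinarith
    · nlinarith
  refine ⟨hpart1, ?_⟩
  -- second part
  have hTmono : ∀ a ∈ Set.Ici (0:ℝ), ∀ b ∈ Set.Ici (0:ℝ), a ≤ b →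
      (1 - c) * (b - a) ≤ T b - T a := by
    intro a ha b hb hab
    refine (convex_Ici 0).mul_sub_le_image_sub_of_le_deriv ?_ ?_ ?_ a ha b hb hab
    · intro z hz
      exact (hTdiff z hz).continuousAt.continuousWithinAt
    · intro z hz
      rw [interior_Ici] at hz
      exact (hTdiff z (le_of_lt hz)).differentiableWithinAt
    · intro z hz
      rw [interior_Ici] at hz
      exact (hpart1 z (le_of_lt hz)).1
  intro x hx y hy
  have hSx := hSpos x hx
  have hSy := hSpos y hy
  rw [one_div, ← div_eq_inv_mul, le_div_iff₀ hc1]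
  rcases le_total (S x) (S y) with h | h
  · have hkey := hTmono (S x) hSx (S y) hSy h
    rw [hTS x hx, hTS y hy] at hkey
    have hxy : x ≤ y := by nlinarith [mul_nonneg hc1.le (sub_nonneg.2 h)]
    rw [abs_of_nonpos (by linarith : S x - S y ≤ 0), abs_of_nonpos (by linarith : x - y ≤ 0)]
    nlinarith
  · have hkey := hTmono (S y) hSy (S x) hSx h
    rw [hTS x hx, hTS y hy] at hkey
    have hxy : y ≤ x := by nlinarith [mul_nonneg hc1.le (sub_nonneg.2 h)]
    rw [abs_of_nonneg (by linarith : 0 ≤ S x - S y), abs_of_nonneg (by linarith : 0 ≤ x - y)]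
    nlinarith
end

section
/- Suppose V, W : ℝ^d → ℝ satisfy, for all x, y: V(x+y) + V(x−y) − 2V(x) ≤ A_p |y|^{p+1} and W(x+y) + W(x−y) − 2W(x) ≥ A_q |y|^{q+1}, with 0 ≤ p ≤ 1 ≤ q, A_p, A_q > 0. If Φ : ℝ^d → ℝ is a smooth convex function whose gradient pushes e^{-V}dx to e^{-W}dx (i.e. V = W(∇Φ) − log det D²Φ with D²Φ > 0), and x₀ is a point where δ_{th}Φ(x) = Φ(x+th) + Φ(x−th) − 2Φ(x) attains its maximum for fixed unit h and t > 0, then letting v = ∇Φ(x₀+th) − ∇Φ(x₀) one has A_q |v|^{q+1} ≤ A_p t^{p+1}, i.e. |v| ≤ (A_p/A_q)^{1/(q+1)} t^{(p+1)/(q+1)}. -/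
/-- The Hessian matrix of a function on Euclidean space, in the standard basis. -/
noncomputable def hessMatrix {d : ℕ} (g : EuclideanSpace ℝ (Fin d) → ℝ)
    (x : EuclideanSpace ℝ (Fin d)) : Matrix (Fin d) (Fin d) ℝ :=
  fun i j => iteratedFDeriv ℝ 2 g x ![EuclideanSpace.single i 1, EuclideanSpace.single j 1]

section MatrixLemmas

open Matrix Finset

variable {d : ℕ}

lemma det_one_add_of_hermitian {M : Matrix (Fin d) (Fin d) ℝ} (hM : M.IsHermitian) :
    (1 + M).det = ∏ i, (1 + hM.eigenvalues i) := by
  have hU : (hM.eigenvectorUnitary : Matrix (Fin d) (Fin d) ℝ) *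
      (star hM.eigenvectorUnitary : Matrix (Fin d) (Fin d) ℝ) = 1 :=
    (Matrix.mem_unitaryGroup_iff).mp hM.eigenvectorUnitary.2
  have h1 : (1 : Matrix (Fin d) (Fin d) ℝ) + M =
      (hM.eigenvectorUnitary : Matrix (Fin d) (Fin d) ℝ) *
        (1 + Matrix.diagonal (RCLike.ofReal ∘ hM.eigenvalues)) *
        (star hM.eigenvectorUnitary : Matrix (Fin d) (Fin d) ℝ) := by
    rw [mul_add, add_mul, mul_one, hU]
    congr 1
    exact hM.spectral_theorem
  have hU' : (star hM.eigenvectorUnitary : Matrix (Fin d) (Fin d) ℝ) *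
      (hM.eigenvectorUnitary : Matrix (Fin d) (Fin d) ℝ) = 1 :=
    (Matrix.mem_unitaryGroup_iff').mp hM.eigenvectorUnitary.2
  rw [h1, det_mul, det_mul, mul_comm, ← mul_assoc, ← det_mul, hU', det_one, one_mul]
  have : (1 : Matrix (Fin d) (Fin d) ℝ) + Matrix.diagonal (RCLike.ofReal ∘ hM.eigenvalues) =
      Matrix.diagonal (fun i => 1 + hM.eigenvalues i) := by
    rw [← Matrix.diagonal_one, Matrix.diagonal_add]
    rfl
  rw [this, det_diagonal]

lemma det_add_posSemidef_factor {A B : Matrix (Fin d) (Fin d) ℝ}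
    (hA : A.PosDef) (hB : B.PosSemidef) :
    ∃ M : Matrix (Fin d) (Fin d) ℝ, M.PosSemidef ∧
      (A + B).det = A.det * (1 + M).det ∧ M.det * A.det = B.det := by
  open scoped MatrixOrder in
  set S := CFC.sqrt A with hSdef
  have hS : S.PosSemidef := by open scoped MatrixOrder in exact (CFC.sqrt_nonneg A).posSemidef
  have hSS : S * S = A := by
    open scoped MatrixOrder in exact CFC.sqrt_mul_sqrt_self A hA.posSemidef.nonneg
  have hdetS : S.det * S.det = A.det := by rw [← det_mul, hSS]
  have hdetSne : S.det ≠ 0 := by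
    intro h0
    have := hA.det_pos
    rw [← hdetS, h0, mul_zero] at this
    exact lt_irrefl _ this
  have hUnit : IsUnit S.det := isUnit_iff_ne_zero.2 hdetSne
  have hSinv : S * S⁻¹ = 1 := mul_nonsing_inv _ hUnit
  have hinvS : S⁻¹ * S = 1 := nonsing_inv_mul _ hUnit
  have hinvHerm : (S⁻¹).IsHermitian := hS.1.inv
  refine ⟨S⁻¹ * B * S⁻¹, ?_, ?_, ?_⟩
  · have := hB.mul_mul_conjTranspose_same S⁻¹
    rwa [hinvHerm.eq] at this
  · have hfac : A + B = S * (1 + S⁻¹ * B * S⁻¹) * S := by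
      have h1 : S * (1 + S⁻¹ * B * S⁻¹) * S = S * S + S * (S⁻¹ * B * S⁻¹) * S := by
        noncomm_ring
      have h2 : S * (S⁻¹ * B * S⁻¹) * S = S * S⁻¹ * B * (S⁻¹ * S) := by
        simp only [Matrix.mul_assoc]
      rw [h1, h2, hSinv, hinvS, one_mul, mul_one, hSS]
    rw [hfac, det_mul, det_mul, ← hdetS]
    ring
  · have hdetinv : (S⁻¹).det = (S.det)⁻¹ := by
      rw [det_nonsing_inv, Ring.inverse_eq_inv']
    rw [det_mul, det_mul, hdetinv, ← hdetS]
    field_simp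

lemma det_sq_ge_of_loewner {A B C : Matrix (Fin d) (Fin d) ℝ}
    (hA : A.PosDef) (hB : B.PosDef) (hC : C.PosDef)
    (hP : (C + C - A - B).PosSemidef) : A.det * B.det ≤ C.det ^ 2 := by
  have hAB : (A + B).PosDef := hA.add hB
  -- Step 1 : det (A+B) ≤ det (C+C)
  have hCC : C + C = (A + B) + (C + C - A - B) := by abel
  obtain ⟨P, hPsd, hfac, -⟩ := det_add_posSemidef_factor hAB hP
  have h1P : (1 : ℝ) ≤ (1 + P).det := by
    rw [det_one_add_of_hermitian hPsd.1]
    have := Finset.prod_le_prod (s := Finset.univ) (f := fun _ : Fin d => (1:ℝ))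
      (g := fun i => 1 + hPsd.1.eigenvalues i) (fun i _ => by norm_num)
      (fun i _ => by have := hPsd.eigenvalues_nonneg i
                     show (1:ℝ) ≤ 1 + hPsd.1.eigenvalues i
                     linarith)
    simpa using this
  have step1 : (A + B).det ≤ (C + C).det := by
    rw [hCC, hfac]
    nlinarith [hAB.det_pos]
  -- Step 2 : 4^d * (det A * det B) ≤ det (A+B)^2
  obtain ⟨M, hMsd, hfac2, hdetM⟩ := det_add_posSemidef_factor hA hB.posSemidef
  have hMdet : M.det = ∏ i, hMsd.1.eigenvalues i := by
    simpa using hMsd.1.det_eq_prod_eigenvalues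
  have h1M : (1 + M).det = ∏ i, (1 + hMsd.1.eigenvalues i) := det_one_add_of_hermitian hMsd.1
  have step2 : (4 : ℝ) ^ d * (A.det * B.det) ≤ (A + B).det ^ 2 := by
    have hprod : ∏ i, (4 * hMsd.1.eigenvalues i) ≤ ∏ i, (1 + hMsd.1.eigenvalues i) ^ 2 := by
      refine Finset.prod_le_prod (fun i _ => ?_) (fun i _ => ?_)
      · have := hMsd.eigenvalues_nonneg i; linarith
      · have := hMsd.eigenvalues_nonneg i
        nlinarith [sq_nonneg (1 - hMsd.1.eigenvalues i)]
    have h4 : ∏ i : Fin d, (4 * hMsd.1.eigenvalues i) = 4 ^ d * M.det := by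
      rw [Finset.prod_mul_distrib, Finset.prod_const, hMdet]
      simp
    have hsq : (∏ i, (1 + hMsd.1.eigenvalues i)) ^ 2
        = ∏ i, (1 + hMsd.1.eigenvalues i) ^ 2 := by
      rw [← Finset.prod_pow]
    calc (4 : ℝ) ^ d * (A.det * B.det)
        = A.det * (4 ^ d * M.det * A.det) := by rw [← hdetM]; ring
      _ ≤ A.det * ((∏ i, (1 + hMsd.1.eigenvalues i)) ^ 2 * A.det) := by
          have hAdet := hA.det_pos
          have h' : 4 ^ d * M.det ≤ (∏ i, (1 + hMsd.1.eigenvalues i)) ^ 2 := by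
            rw [hsq, ← h4]; exact hprod
          exact mul_le_mul_of_nonneg_left
            (mul_le_mul_of_nonneg_right h' hAdet.le) hAdet.le
      _ = (A + B).det ^ 2 := by rw [hfac2, h1M]; ring
  -- Step 3 : det (C+C) = 2^d * det C
  have step3 : (C + C).det = 2 ^ d * C.det := by
    have : C + C = (2 : ℝ) • C := by rw [two_smul]
    rw [this, det_smul]
    simp
  have hABpos := hAB.det_pos
  have hsq : (A + B).det ^ 2 ≤ (C + C).det ^ 2 := by nlinarith
  rw [step3] at hsq
  have h4d : (4 : ℝ) ^ d = (2 : ℝ) ^ d * 2 ^ d := by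
    rw [← mul_pow]; norm_num
  have hCC2 : ((2:ℝ) ^ d * C.det) ^ 2 = 4 ^ d * C.det ^ 2 := by rw [h4d]; ring
  have h4pos : (0 : ℝ) < 4 ^ d := by positivity
  have hfin : (4:ℝ) ^ d * (A.det * B.det) ≤ 4 ^ d * C.det ^ 2 := by
    calc (4:ℝ) ^ d * (A.det * B.det) ≤ (A + B).det ^ 2 := step2
      _ ≤ (2 ^ d * C.det) ^ 2 := hsq
      _ = 4 ^ d * C.det ^ 2 := hCC2
  exact le_of_mul_le_mul_left hfin h4pos

end MatrixLemmas

section AnalysisLemmas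

open Filter Set Topology Matrix

lemma second_deriv_test {ψ : ℝ → ℝ} (hψ : ContDiff ℝ (⊤ : ℕ∞) ψ)
    (hmax : ∀ s, ψ s ≤ ψ 0) {c : ℝ} (hd : HasDerivAt (deriv ψ) c 0) : c ≤ 0 := by
  by_contra hc
  push_neg at hc
  have hloc : IsLocalMax ψ 0 := Filter.Eventually.of_forall hmax
  have h0 : deriv ψ 0 = 0 := hloc.deriv_eq_zero
  have hslope : Filter.Tendsto (slope (deriv ψ) 0) (𝓝[≠] 0) (𝓝 c) :=
    hasDerivAt_iff_tendsto_slope.mp hd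
  have hev : ∀ᶠ s in 𝓝[≠] (0:ℝ), 0 < slope (deriv ψ) 0 s :=
    hslope.eventually (eventually_gt_nhds hc)
  rw [eventually_nhdsWithin_iff] at hev
  obtain ⟨δ, hδ, Hδ⟩ := Metric.eventually_nhds_iff.mp hev
  have hfpos : ∀ s ∈ Set.Ioo (0:ℝ) δ, 0 < deriv ψ s := by
    intro s hs
    have hsne : s ∈ ({(0:ℝ)}ᶜ : Set ℝ) := by
      simp [ne_of_gt hs.1]
    have hdist : dist s 0 < δ := by
      rw [Real.dist_eq, sub_zero, abs_of_pos hs.1]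
      exact hs.2
    have hsl := Hδ hdist hsne
    rw [slope_def_field, h0, sub_zero, sub_zero] at hsl
    rcases div_pos_iff.mp hsl with ⟨h1, _⟩ | ⟨_, h2⟩
    · exact h1
    · linarith [hs.1]
  have hmono : StrictMonoOn ψ (Set.Icc 0 (δ/2)) := by
    refine strictMonoOn_of_deriv_pos (convex_Icc _ _) hψ.continuous.continuousOn ?_
    intro s hs
    rw [interior_Icc] at hs
    exact hfpos s ⟨hs.1, lt_of_lt_of_le hs.2 (by linarith)⟩
  have hlt : ψ 0 < ψ (δ/2) := by
    refine hmono ?_ ?_ (by linarith)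
    · exact ⟨le_refl _, by linarith⟩
    · exact ⟨by linarith, le_refl _⟩
  exact absurd (hmax (δ/2)) (not_le.mpr hlt)

variable {d : ℕ}

lemma line_hasDerivAt (Φ : EuclideanSpace ℝ (Fin d) → ℝ) (hΦ : ContDiff ℝ (⊤ : ℕ∞) Φ)
    (x u : EuclideanSpace ℝ (Fin d)) (s : ℝ) :
    HasDerivAt (fun s : ℝ => Φ (x + s • u)) (fderiv ℝ Φ (x + s • u) u) s := by
  have hl : HasDerivAt (fun s : ℝ => x + s • u) u s := by
    simpa using ((hasDerivAt_id s).smul_const u).const_add x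
  exact (hΦ.differentiable (by simp) (x + s • u)).hasFDerivAt.comp_hasDerivAt s hl

lemma line_deriv2 (Φ : EuclideanSpace ℝ (Fin d) → ℝ) (hΦ : ContDiff ℝ (⊤ : ℕ∞) Φ)
    (x u : EuclideanSpace ℝ (Fin d)) :
    HasDerivAt (fun s : ℝ => fderiv ℝ Φ (x + s • u) u)
      (fderiv ℝ (fderiv ℝ Φ) x u u) 0 := by
  have hl : HasDerivAt (fun s : ℝ => x + s • u) u 0 := by
    simpa using ((hasDerivAt_id (0:ℝ)).smul_const u).const_add x
  have hG : ContDiff ℝ (⊤ : ℕ∞) (fderiv ℝ Φ) := hΦ.fderiv_right (by simp)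
  have h1 : HasDerivAt (fun s : ℝ => fderiv ℝ Φ (x + s • u))
      (fderiv ℝ (fderiv ℝ Φ) x u) 0 := by
    have h2 := (hG.differentiable (by simp) (x + (0:ℝ) • u)).hasFDerivAt.comp_hasDerivAt 0 hl
    simpa [Function.comp_def] using h2
  have h3 := ((ContinuousLinearMap.apply ℝ ℝ u).hasFDerivAt).comp_hasDerivAt 0 h1
  exact h3

lemma euclidean_eq_sum_single (u : EuclideanSpace ℝ (Fin d)) :
    u = ∑ i, u i • EuclideanSpace.single i 1 := by
  have h := (EuclideanSpace.basisFun (Fin d) ℝ).sum_repr u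
  simp only [EuclideanSpace.basisFun_apply, EuclideanSpace.basisFun_repr] at h
  exact h.symm

lemma quad_form_expand (f2 : EuclideanSpace ℝ (Fin d) →L[ℝ] EuclideanSpace ℝ (Fin d) →L[ℝ] ℝ)
    (c : Fin d → ℝ) :
    f2 ((WithLp.equiv 2 (Fin d → ℝ)).symm c) ((WithLp.equiv 2 (Fin d → ℝ)).symm c)
      = dotProduct c
        ((fun i j => f2 (EuclideanSpace.single i 1) (EuclideanSpace.single j 1)) *ᵥ c) := by
  have hu : (WithLp.equiv 2 (Fin d → ℝ)).symm c = ∑ i, c i • EuclideanSpace.single i 1 := by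
    nth_rw 1 [euclidean_eq_sum_single ((WithLp.equiv 2 (Fin d → ℝ)).symm c)]
    simp [WithLp.equiv_symm_apply]
  rw [hu]
  simp only [map_sum, _root_.map_smul, ContinuousLinearMap.sum_apply, ContinuousLinearMap.smul_apply,
    ContinuousLinearMap.coe_sum', ContinuousLinearMap.coe_smul', Finset.sum_apply, Pi.smul_apply,
    smul_eq_mul, dotProduct, Matrix.mulVec, Finset.mul_sum]
  rw [Finset.sum_comm]
  refine Finset.sum_congr rfl fun i _ => Finset.sum_congr rfl fun j _ => by ring

end AnalysisLemmas

open Matrix in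
theorem holder_bound_at_maximum_point {d : ℕ}
    (V W Φ : EuclideanSpace ℝ (Fin d) → ℝ)
    (p q Ap Aq : ℝ) (hp0 : 0 ≤ p) (hp1 : p ≤ 1) (hq : 1 ≤ q)
    (hAp : 0 < Ap) (hAq : 0 < Aq)
    (hV : ∀ x y : EuclideanSpace ℝ (Fin d),
      V (x + y) + V (x - y) - 2 * V x ≤ Ap * ‖y‖ ^ (p + 1))
    (hW : ∀ x y : EuclideanSpace ℝ (Fin d),
      Aq * ‖y‖ ^ (q + 1) ≤ W (x + y) + W (x - y) - 2 * W x)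
    (hΦ : ContDiff ℝ (⊤ : ℕ∞) Φ) (hconv : ConvexOn ℝ Set.univ Φ)
    (hpos : ∀ x, (hessMatrix Φ x).PosDef)
    (hMA : ∀ x, V x = W (gradient Φ x) - Real.log (hessMatrix Φ x).det)
    (h : EuclideanSpace ℝ (Fin d)) (hh : ‖h‖ = 1) (t : ℝ) (ht : 0 < t)
    (x₀ : EuclideanSpace ℝ (Fin d))
    (hmax : ∀ x, Φ (x + t • h) + Φ (x - t • h) - 2 * Φ x ≤
      Φ (x₀ + t • h) + Φ (x₀ - t • h) - 2 * Φ x₀) :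
    Aq * ‖gradient Φ (x₀ + t • h) - gradient Φ x₀‖ ^ (q + 1) ≤ Ap * t ^ (p + 1) ∧
    ‖gradient Φ (x₀ + t • h) - gradient Φ x₀‖ ≤
      (Ap / Aq) ^ (1 / (q + 1)) * t ^ ((p + 1) / (q + 1)) := by
  classical
  set a : EuclideanSpace ℝ (Fin d) := t • h with ha
  have hdiff : Differentiable ℝ Φ := hΦ.differentiable (by simp)
  -- first-order condition
  have hDp : HasFDerivAt (fun x : EuclideanSpace ℝ (Fin d) => Φ (x + a))
      (fderiv ℝ Φ (x₀ + a)) x₀ := by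
    have ht' : HasFDerivAt (fun x : EuclideanSpace ℝ (Fin d) => x + a)
        (ContinuousLinearMap.id ℝ (EuclideanSpace ℝ (Fin d))) x₀ := by
      simpa using (hasFDerivAt_id x₀).add_const a
    simpa [Function.comp_def] using (hdiff (x₀ + a)).hasFDerivAt.comp x₀ ht'
  have hDm : HasFDerivAt (fun x : EuclideanSpace ℝ (Fin d) => Φ (x - a))
      (fderiv ℝ Φ (x₀ - a)) x₀ := by
    have ht' : HasFDerivAt (fun x : EuclideanSpace ℝ (Fin d) => x - a)
        (ContinuousLinearMap.id ℝ (EuclideanSpace ℝ (Fin d))) x₀ := by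
      simpa using (hasFDerivAt_id x₀).sub_const a
    simpa [Function.comp_def] using (hdiff (x₀ - a)).hasFDerivAt.comp x₀ ht'
  have hD0 : HasFDerivAt (fun x : EuclideanSpace ℝ (Fin d) => 2 * Φ x)
      ((2:ℝ) • fderiv ℝ Φ x₀) x₀ := (hdiff x₀).hasFDerivAt.const_mul 2
  have hg : HasFDerivAt (fun x : EuclideanSpace ℝ (Fin d) =>
      Φ (x + a) + Φ (x - a) - 2 * Φ x)
      (fderiv ℝ Φ (x₀ + a) + fderiv ℝ Φ (x₀ - a) - (2:ℝ) • fderiv ℝ Φ x₀) x₀ :=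
    (hDp.add hDm).sub hD0
  have hlocmax : IsLocalMax (fun x : EuclideanSpace ℝ (Fin d) =>
      Φ (x + a) + Φ (x - a) - 2 * Φ x) x₀ := Filter.Eventually.of_forall hmax
  have hDsum : fderiv ℝ Φ (x₀ + a) + fderiv ℝ Φ (x₀ - a) = (2:ℝ) • fderiv ℝ Φ x₀ := by
    have h1 := hlocmax.fderiv_eq_zero
    rw [hg.fderiv] at h1
    exact sub_eq_zero.mp h1
  have hgradsum : gradient Φ (x₀ + a) + gradient Φ (x₀ - a) = (2:ℝ) • gradient Φ x₀ := by
    simp only [gradient]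
    rw [← _root_.map_add, hDsum, _root_.map_smul]
  set v : EuclideanSpace ℝ (Fin d) := gradient Φ (x₀ + a) - gradient Φ x₀ with hv
  have hplus : gradient Φ x₀ + v = gradient Φ (x₀ + a) := by
    rw [hv]; abel
  have hminus : gradient Φ x₀ - v = gradient Φ (x₀ - a) := by
    rw [two_smul] at hgradsum
    rw [hv]
    have := eq_sub_of_add_eq' hgradsum
    rw [this]
    abel
  -- second-order condition
  have hsec : ∀ u : EuclideanSpace ℝ (Fin d),
      fderiv ℝ (fderiv ℝ Φ) (x₀ + a) u u + fderiv ℝ (fderiv ℝ Φ) (x₀ - a) u u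
        - 2 * fderiv ℝ (fderiv ℝ Φ) x₀ u u ≤ 0 := by
    intro u
    set ψ : ℝ → ℝ := fun s =>
      Φ ((x₀ + a) + s • u) + Φ ((x₀ - a) + s • u) - 2 * Φ (x₀ + s • u) with hψ
    have hlineC : ∀ y : EuclideanSpace ℝ (Fin d),
        ContDiff ℝ (⊤ : ℕ∞) (fun s : ℝ => Φ (y + s • u)) := by
      intro y
      exact hΦ.comp (contDiff_const.add (contDiff_id.smul contDiff_const))
    have hψC : ContDiff ℝ (⊤ : ℕ∞) ψ :=
      ((hlineC (x₀ + a)).add (hlineC (x₀ - a))).sub (contDiff_const.mul (hlineC x₀))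
    have hψmax : ∀ s, ψ s ≤ ψ 0 := by
      intro s
      have h1 : x₀ + s • u + a = (x₀ + a) + s • u := by abel
      have h2 : x₀ + s • u - a = (x₀ - a) + s • u := by abel
      have h3 := hmax (x₀ + s • u)
      rw [h1, h2] at h3
      simpa [hψ] using h3
    have hd1 : ∀ s : ℝ, HasDerivAt ψ
        (fderiv ℝ Φ ((x₀ + a) + s • u) u + fderiv ℝ Φ ((x₀ - a) + s • u) u
          - 2 * fderiv ℝ Φ (x₀ + s • u) u) s := fun s =>
      ((line_hasDerivAt Φ hΦ (x₀ + a) u s).add (line_hasDerivAt Φ hΦ (x₀ - a) u s)).sub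
        ((line_hasDerivAt Φ hΦ x₀ u s).const_mul 2)
    have hderiv : deriv ψ = fun s =>
        fderiv ℝ Φ ((x₀ + a) + s • u) u + fderiv ℝ Φ ((x₀ - a) + s • u) u
          - 2 * fderiv ℝ Φ (x₀ + s • u) u := funext fun s => (hd1 s).deriv
    have hd2 : HasDerivAt (deriv ψ)
        (fderiv ℝ (fderiv ℝ Φ) (x₀ + a) u u + fderiv ℝ (fderiv ℝ Φ) (x₀ - a) u u
          - 2 * fderiv ℝ (fderiv ℝ Φ) x₀ u u) 0 := by
      rw [hderiv]
      exact ((line_deriv2 Φ hΦ (x₀ + a) u).add (line_deriv2 Φ hΦ (x₀ - a) u)).sub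
        ((line_deriv2 Φ hΦ x₀ u).const_mul 2)
    exact second_deriv_test hψC hψmax hd2
  -- translate to Hessian matrices
  have hessEntry : ∀ (x : EuclideanSpace ℝ (Fin d)) (i j : Fin d),
      hessMatrix Φ x i j = fderiv ℝ (fderiv ℝ Φ) x
        (EuclideanSpace.single i 1) (EuclideanSpace.single j 1) := by
    intro x i j
    show iteratedFDeriv ℝ 2 Φ x ![EuclideanSpace.single i 1, EuclideanSpace.single j 1] = _
    rw [iteratedFDeriv_two_apply]
    simp
  have hquad : ∀ (x : EuclideanSpace ℝ (Fin d)) (c : Fin d → ℝ),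
      dotProduct c (hessMatrix Φ x *ᵥ c)
        = fderiv ℝ (fderiv ℝ Φ) x ((WithLp.equiv 2 (Fin d → ℝ)).symm c)
            ((WithLp.equiv 2 (Fin d → ℝ)).symm c) := by
    intro x c
    have hMeq : hessMatrix Φ x = fun i j => fderiv ℝ (fderiv ℝ Φ) x
        (EuclideanSpace.single i 1) (EuclideanSpace.single j 1) := by
      funext i j
      exact hessEntry x i j
    rw [hMeq]
    exact (quad_form_expand (fderiv ℝ (fderiv ℝ Φ) x) c).symm
  have hPSD : (hessMatrix Φ x₀ + hessMatrix Φ x₀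
      - hessMatrix Φ (x₀ + a) - hessMatrix Φ (x₀ - a)).PosSemidef := by
    refine Matrix.PosSemidef.of_dotProduct_mulVec_nonneg ?_ ?_
    · exact (((hpos x₀).1.add (hpos x₀).1).sub (hpos (x₀ + a)).1).sub (hpos (x₀ - a)).1
    · intro c
      have hstar : star c = c := by
        funext i; simp
      rw [hstar]
      rw [Matrix.sub_mulVec, Matrix.sub_mulVec, Matrix.add_mulVec,
        dotProduct_sub, dotProduct_sub, dotProduct_add]
      have h1 := hsec ((WithLp.equiv 2 (Fin d → ℝ)).symm c)
      rw [← hquad, ← hquad, ← hquad] at h1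
      linarith
  -- determinant inequality
  have hdet : (hessMatrix Φ (x₀ + a)).det * (hessMatrix Φ (x₀ - a)).det
      ≤ (hessMatrix Φ x₀).det ^ 2 :=
    det_sq_ge_of_loewner (hpos (x₀ + a)) (hpos (x₀ - a)) (hpos x₀) hPSD
  have hlog : Real.log (hessMatrix Φ (x₀ + a)).det + Real.log (hessMatrix Φ (x₀ - a)).det
      ≤ 2 * Real.log (hessMatrix Φ x₀).det := by
    rw [← Real.log_mul (ne_of_gt (hpos (x₀ + a)).det_pos) (ne_of_gt (hpos (x₀ - a)).det_pos)]
    have h2 : (2:ℝ) * Real.log (hessMatrix Φ x₀).det = Real.log ((hessMatrix Φ x₀).det ^ 2) := by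
      rw [Real.log_pow]
      norm_num
    rw [h2]
    exact Real.log_le_log
      (mul_pos (hpos (x₀ + a)).det_pos (hpos (x₀ - a)).det_pos) hdet
  -- combine
  have hnorm_a : ‖a‖ = t := by
    rw [ha, norm_smul, hh, Real.norm_eq_abs, abs_of_pos ht, mul_one]
  have hVineq := hV x₀ a
  rw [hnorm_a] at hVineq
  have hWineq := hW (gradient Φ x₀) v
  rw [hplus, hminus] at hWineq
  have hMAp := hMA (x₀ + a)
  have hMAm := hMA (x₀ - a)
  have hMA0 := hMA x₀
  have key : Aq * ‖v‖ ^ (q + 1) ≤ Ap * t ^ (p + 1) := by linarith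
  refine ⟨key, ?_⟩
  have hq1 : (0:ℝ) < q + 1 := by linarith
  have h1 : ‖v‖ ^ (q + 1) ≤ (Ap / Aq) * t ^ (p + 1) := by
    rw [div_mul_eq_mul_div, le_div_iff₀ hAq, mul_comm]
    exact key
  have h2 : (‖v‖ ^ (q + 1)) ^ (1 / (q + 1)) = ‖v‖ := by
    rw [one_div]
    exact Real.rpow_rpow_inv (norm_nonneg v) (ne_of_gt hq1)
  calc ‖v‖ = (‖v‖ ^ (q + 1)) ^ (1 / (q + 1)) := h2.symm
    _ ≤ ((Ap / Aq) * t ^ (p + 1)) ^ (1 / (q + 1)) := by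
        apply Real.rpow_le_rpow (Real.rpow_nonneg (norm_nonneg v) _) h1
        positivity
    _ = (Ap / Aq) ^ (1 / (q + 1)) * (t ^ (p + 1)) ^ (1 / (q + 1)) := by
        apply Real.mul_rpow (le_of_lt (div_pos hAp hAq))
        positivity
    _ = (Ap / Aq) ^ (1 / (q + 1)) * t ^ ((p + 1) / (q + 1)) := by
        rw [← Real.rpow_mul (le_of_lt ht), mul_one_div]
end
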